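/- arXiv:1908.07378 — 2 statements merged into one kernel-verified Lean document; each statement's English description precedes it below -/
import Mathlib

section
/- Let n ≥ 1, λ, v ∈ ℝ with λ > v > 0. Then the function θ(s) = 2·arctan( √((λ+v)/(λ−v)) · tan( (n/2)·√(λ²−v²)·s ) ), defined on the interval |s| < π/(n√(λ²−v²)), satisfies the ODE θ'(s) = n·(v·cos θ(s) + λ) with θ(0) = 0. -/
/-!
With `c = √(λ² - v²)` and `k = √((λ + v)/(λ - v))`, put `x = k tan(n c s / 2)`. The chain rule gives
`θ' = n c k (1 + tan²) / (1 + x²)`, while `cos θ = (1 - x²)/(1 + x²)` turns the right-hand side into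
`n ((λ + v) + (λ - v) x²) / (1 + x²)`. The two agree because `c k = λ + v` and `(λ - v) k² = λ + v`.
The interval `|s| < π/(n c)` is exactly where `|n c s / 2| < π/2`, so the tangent is differentiable.
-/

open Real

theorem Real.cos_two_mul_arctan (x : ℝ) : cos (2 * arctan x) = (1 - x ^ 2) / (1 + x ^ 2) := by
  rw [cos_two_mul, cos_sq_arctan]
  field_simp
  ring

theorem Real.hasDerivAt_arctan_mul_tan {k ω s : ℝ} (hs : cos (ω * s) ≠ 0) :
    HasDerivAt (fun s => arctan (k * tan (ω * s)))
      (k * ω * (1 + tan (ω * s) ^ 2) / (1 + (k * tan (ω * s)) ^ 2)) s := by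
  have hlin : HasDerivAt (fun s => ω * s) ω s := by simpa using (hasDerivAt_id s).const_mul ω
  refine (((hasDerivAt_tan hs).comp s hlin).const_mul k).arctan.congr_deriv ?_
  rw [Function.comp_apply, one_div, ← inv_one_add_tan_sq hs]
  field_simp

theorem Real.sqrt_sq_sub_sq_mul_sqrt_div {a b : ℝ} (hab : |a| < b) :
    √(b ^ 2 - a ^ 2) * √((b + a) / (b - a)) = b + a := by
  obtain ⟨hneg, hlt⟩ := abs_lt.mp hab
  have hpos : 0 < b - a := by linarith
  rw [← sqrt_mul (by nlinarith), show (b ^ 2 - a ^ 2) * ((b + a) / (b - a)) = (b + a) ^ 2 by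
    field_simp; ring, sqrt_sq (by linarith)]

theorem hasDerivAt_two_mul_arctan_of_abs_lt {a b : ℝ} (hab : |a| < b) {m s : ℝ}
    (hs : cos (m / 2 * √(b ^ 2 - a ^ 2) * s) ≠ 0) :
    HasDerivAt (fun s => 2 * arctan (√((b + a) / (b - a)) * tan (m / 2 * √(b ^ 2 - a ^ 2) * s)))
      (m * (a * cos (2 * arctan (√((b + a) / (b - a)) * tan (m / 2 * √(b ^ 2 - a ^ 2) * s))) + b))
      s := by
  set c := √(b ^ 2 - a ^ 2)
  set k := √((b + a) / (b - a))
  have hck : c * k = b + a := sqrt_sq_sub_sq_mul_sqrt_div hab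
  have hk : (b - a) * k ^ 2 = b + a := by
    obtain ⟨hneg, hlt⟩ := abs_lt.mp hab
    rw [sq_sqrt (div_nonneg (by linarith) (by linarith))]
    field_simp [show b - a ≠ 0 by linarith]
  refine ((hasDerivAt_arctan_mul_tan hs).const_mul 2).congr_deriv ?_
  rw [cos_two_mul_arctan]
  generalize tan (m / 2 * c * s) = t
  field_simp
  linear_combination m * (1 + t ^ 2) * hck - m * t ^ 2 * hk

theorem Real.cos_pos_of_abs_lt_pi_div {w s : ℝ} (hs : |s| < π / w) : 0 < cos (w / 2 * s) := by
  have hw : 0 < w := by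
    by_contra! hw
    exact (abs_nonneg s).not_gt (hs.trans_le (div_nonpos_of_nonneg_of_nonpos pi_pos.le hw))
  rw [lt_div_iff₀ hw] at hs
  refine cos_pos_of_mem_Ioo (abs_lt.mp ?_)
  rw [abs_mul, abs_of_pos (half_pos hw)]
  linarith

theorem stmt_0_general (n : ℕ) (lam v : ℝ) (hv : 0 < v) (hlv : v < lam)
    (θ : ℝ → ℝ)
    (hθ : ∀ s, θ s =
      2 * Real.arctan (Real.sqrt ((lam + v) / (lam - v)) *
        Real.tan ((n / 2) * Real.sqrt (lam ^ 2 - v ^ 2) * s))) :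
    θ 0 = 0 ∧
    ∀ s : ℝ, |s| < Real.pi / (n * Real.sqrt (lam ^ 2 - v ^ 2)) →
      HasDerivAt θ (n * (v * Real.cos (θ s) + lam)) s := by
  obtain rfl : θ = _ := funext hθ
  refine ⟨by simp, fun s hs => ?_⟩
  have hcos := cos_pos_of_abs_lt_pi_div hs
  rw [← div_mul_eq_mul_div] at hcos
  exact hasDerivAt_two_mul_arctan_of_abs_lt (abs_lt.mpr ⟨by linarith, hlv⟩) hcos.ne'

theorem stmt_0 (n : ℕ) (hn : 1 ≤ n) (lam v : ℝ) (hv : 0 < v) (hlv : v < lam)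
    (θ : ℝ → ℝ)
    (hθ : ∀ s, θ s =
      2 * Real.arctan (Real.sqrt ((lam + v) / (lam - v)) *
        Real.tan ((n / 2) * Real.sqrt (lam ^ 2 - v ^ 2) * s))) :
    θ 0 = 0 ∧
    ∀ s : ℝ, |s| < Real.pi / (n * Real.sqrt (lam ^ 2 - v ^ 2)) →
      HasDerivAt θ (n * (v * Real.cos (θ s) + lam)) s :=
  stmt_0_general n lam v hv hlv θ hθ
end

section
/- Let n ≥ 1 and v > λ > 0. The function θ(s) = 2·arctan( √((v+λ)/(v−λ)) · tanh( (n/2)·√(v²−λ²)·s ) ) satisfies θ'(s) = n·(v·cos θ(s) + λ) for all s ∈ ℝ, with θ(0) = 0. -/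
/-!
Write `θ s = 2 arctan (a tanh (b s))` with `a = √((v+λ)/(v-λ))` and `b = (n/2)√(v²-λ²)`, and
`t = tanh (b s)`. Then `θ' = 2ab(1-t²)/(1+a²t²)` while the double-angle formula gives
`cos θ = (1-a²t²)/(1+a²t²)`, so `θ' = p cos θ + q` as soon as `a²(p-q) = p+q` and `2ab = p+q`.
With `p = nv`, `q = nλ` both identities follow from `√((v+λ)/(v-λ)) · √(v²-λ²) = v+λ`.
-/

open Real

namespace Real

theorem hasDerivAt_tanh (x : ℝ) : HasDerivAt tanh (1 - tanh x ^ 2) x := by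
  have hcosh : cosh x ≠ 0 := (cosh_pos x).ne'
  have h := (hasDerivAt_sinh x).div (hasDerivAt_cosh x) hcosh
  rw [show sinh / cosh = tanh from funext fun y => (tanh_eq_sinh_div_cosh y).symm] at h
  refine h.congr_deriv ?_
  rw [tanh_eq_sinh_div_cosh]
  field_simp

theorem cos_two_mul_arctan_s2 (x : ℝ) : cos (2 * arctan x) = (1 - x ^ 2) / (1 + x ^ 2) := by
  rw [cos_two_mul, cos_sq_arctan]
  field_simp
  ring

end Real

theorem hasDerivAt_two_mul_arctan_mul_tanh (a b s : ℝ) :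
    HasDerivAt (fun s => 2 * arctan (a * tanh (b * s)))
      (2 * a * b * (1 - tanh (b * s) ^ 2) / (1 + (a * tanh (b * s)) ^ 2)) s := by
  have h := ((((hasDerivAt_tanh (b * s)).comp s
    ((hasDerivAt_id s).const_mul b)).const_mul a).arctan).const_mul 2
  refine h.congr_deriv ?_
  simp only [Function.comp_apply]
  field_simp

theorem hasDerivAt_two_mul_arctan_mul_tanh_eq_mul_cos_add {p q a b : ℝ}
    (ha : a ^ 2 * (p - q) = p + q) (hab : 2 * a * b = p + q) (s : ℝ) :
    HasDerivAt (fun s => 2 * arctan (a * tanh (b * s)))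
      (p * cos (2 * arctan (a * tanh (b * s))) + q) s := by
  convert hasDerivAt_two_mul_arctan_mul_tanh a b s using 1
  rw [cos_two_mul_arctan_s2]
  field_simp
  linear_combination (-tanh (b * s) ^ 2) * ha - (1 - tanh (b * s) ^ 2) * hab

theorem stmt_2_general (n : ℕ) (lam v : ℝ) (hlam : 0 < lam) (hlv : lam < v)
    (θ : ℝ → ℝ)
    (hθ : ∀ s, θ s =
      2 * Real.arctan (Real.sqrt ((v + lam) / (v - lam)) *
        Real.tanh ((n / 2) * Real.sqrt (v ^ 2 - lam ^ 2) * s))) :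
    (∀ s : ℝ, HasDerivAt θ (n * (v * Real.cos (θ s) + lam)) s) ∧ θ 0 = 0 := by
  obtain rfl : θ = _ := funext hθ
  have hsub : 0 < v - lam := by linarith
  have hratio : 0 ≤ (v + lam) / (v - lam) := div_nonneg (by linarith) hsub.le
  have hsq : √((v + lam) / (v - lam)) ^ 2 * (n * v - n * lam) = n * v + n * lam := by
    rw [sq_sqrt hratio]
    field_simp
  have hprod : √((v + lam) / (v - lam)) * √(v ^ 2 - lam ^ 2) = v + lam := by
    rw [← sqrt_mul hratio, show (v + lam) / (v - lam) * (v ^ 2 - lam ^ 2) = (v + lam) ^ 2 by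
      field_simp; ring, sqrt_sq (by linarith)]
  refine ⟨fun s => ?_, by simp⟩
  convert hasDerivAt_two_mul_arctan_mul_tanh_eq_mul_cos_add hsq ?_ s using 1
  · ring
  · linear_combination (n : ℝ) * hprod

theorem stmt_2 (n : ℕ) (hn : 1 ≤ n) (lam v : ℝ) (hlam : 0 < lam) (hlv : lam < v)
    (θ : ℝ → ℝ)
    (hθ : ∀ s, θ s =
      2 * Real.arctan (Real.sqrt ((v + lam) / (v - lam)) *
        Real.tanh ((n / 2) * Real.sqrt (v ^ 2 - lam ^ 2) * s))) :
    (∀ s : ℝ, HasDerivAt θ (n * (v * Real.cos (θ s) + lam)) s) ∧ θ 0 = 0 :=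
  stmt_2_general n lam v hlam hlv θ hθ
end
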